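/- arXiv:2001.10967 — 4 statements merged into one kernel-verified Lean document; each statement's English description precedes it below -/
import Mathlib

section
/- The radical Rad(A) of a skew left brace A equals the set of all non-generating elements of A, where a ∈ A is non-generating if for every subset S ⊆ A, (S ∪ {a}) = A implies (S) = A. -/
/-- A skew left brace: `(A,+)` and `(A,∘)` (written `*`) are groups with
`a ∘ (b + c) = a ∘ b - a + a ∘ c`. -/
class SkewBrace (A : Type*) extends AddGroup A, Group A where
  compat : ∀ a b c : A, a * (b + c) = a * b + (-a + a * c)

namespace SkewBrace

variable {A : Type*}

/-- `λ_a (b) = -a + a ∘ b`. -/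
def lam [SkewBrace A] (a b : A) : A := -a + a * b

/-- `a * b = λ_a(b) - b = -a + a∘b - b` (the brace star operation). -/
def star [SkewBrace A] (a b : A) : A := -a + a * b - b

/-- An ideal of a skew left brace: a subgroup of `(A,+)`, normal in `(A,+)` and
`(A,∘)`, and invariant under all `λ_a`. -/
structure Ideal (A : Type*) [SkewBrace A] where
  carrier : Set A
  zero_mem : (0 : A) ∈ carrier
  add_mem : ∀ ⦃a b : A⦄, a ∈ carrier → b ∈ carrier → a + b ∈ carrier
  neg_mem : ∀ ⦃a : A⦄, a ∈ carrier → -a ∈ carrier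
  add_conj_mem : ∀ (a : A) ⦃b : A⦄, b ∈ carrier → a + b + -a ∈ carrier
  mul_conj_mem : ∀ (a : A) ⦃b : A⦄, b ∈ carrier → a * b * a⁻¹ ∈ carrier
  lam_mem : ∀ (a : A) ⦃b : A⦄, b ∈ carrier → lam a b ∈ carrier

/-- The ideal generated by a set, as a set. -/
def genIdeal [SkewBrace A] (S : Set A) : Set A :=
  {x | ∀ I : Ideal A, S ⊆ I.carrier → x ∈ I.carrier}

/-- A maximal ideal: a proper ideal such that the only ideals containing it are
itself and the whole brace. -/
def Ideal.IsMaximal [SkewBrace A] (M : Ideal A) : Prop :=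
  M.carrier ≠ Set.univ ∧
    ∀ J : Ideal A, M.carrier ⊆ J.carrier → J.carrier = M.carrier ∨ J.carrier = Set.univ

/-- The radical: the intersection of all maximal ideals (the whole brace if there
are none). -/
def radical (A : Type*) [SkewBrace A] : Set A :=
  {x | ∀ M : Ideal A, M.IsMaximal → x ∈ M.carrier}

/-- The set of all elements `a * b` (star). -/
def starSet (A : Type*) [SkewBrace A] : Set A := {x | ∃ a b : A, star a b = x}

/-- `A⁽²⁾` as the ideal generated by all `a * b`. -/
def sq (A : Type*) [SkewBrace A] : Set A := genIdeal (starSet A)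

/-- `A⁽²⁾` as the additive subgroup generated by all `a * b`. -/
def sqAdd (A : Type*) [SkewBrace A] : Set A := (AddSubgroup.closure (starSet A) : Set A)

open scoped Classical in
/-- The weight of a skew left brace: the minimal number of elements generating it
as an ideal (with `ω(0) = 1` by convention). -/
noncomputable def weight (A : Type*) [SkewBrace A] : ℕ∞ :=
  if Subsingleton A then 1
  else ⨅ (S : Finset A) (_ : genIdeal (S : Set A) = Set.univ), (S.card : ℕ∞)

/-- Artinian: every descending chain of ideals is eventually stationary. -/
def IsArtinian (A : Type*) [SkewBrace A] : Prop :=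
  ∀ f : ℕ → Ideal A, (∀ n, (f (n + 1)).carrier ⊆ (f n).carrier) →
    ∃ N, ∀ n, N ≤ n → (f n).carrier = (f N).carrier

/-- A homomorphism of skew left braces. -/
structure BraceHom (A B : Type*) [SkewBrace A] [SkewBrace B] where
  toFun : A → B
  map_add' : ∀ x y, toFun (x + y) = toFun x + toFun y
  map_mul' : ∀ x y, toFun (x * y) = toFun x * toFun y

/-- The kernel of a brace homomorphism. -/
def BraceHom.ker {A B : Type*} [SkewBrace A] [SkewBrace B] (f : BraceHom A B) : Set A :=
  {a | f.toFun a = 0}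

/-- The socle `Soc(A) = Ker λ ∩ Z(A,+)`. -/
def Soc (A : Type*) [SkewBrace A] : Set A :=
  {a | (∀ b : A, lam a b = b) ∧ ∀ b : A, a + b = b + a}

/-- The annihilator `Ann(A) = Soc(A) ∩ Z(A,∘)`. -/
def ann (A : Type*) [SkewBrace A] : Set A :=
  {a | (∀ b : A, lam a b = b) ∧ (∀ b : A, a + b = b + a) ∧ (∀ b : A, a * b = b * a)}

/-- A simple skew left brace: it has exactly two ideals, `0` and itself. -/
def IsSimple (A : Type*) [SkewBrace A] : Prop :=
  (∃ x y : A, x ≠ y) ∧ ∀ I : Ideal A, I.carrier = {(0 : A)} ∨ I.carrier = Set.univ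

/-- A prime ideal `P`: the quotient `A/P` is a prime brace; internally, for all
ideals `I, J ⊇ P` with `I * J ⊆ P`, one of `I, J` equals `P`. -/
def Ideal.IsPrime [SkewBrace A] (P : Ideal A) : Prop :=
  ∀ I J : Ideal A, P.carrier ⊆ I.carrier → P.carrier ⊆ J.carrier →
    (∀ i ∈ I.carrier, ∀ j ∈ J.carrier, star i j ∈ P.carrier) →
    I.carrier ⊆ P.carrier ∨ J.carrier ⊆ P.carrier

end SkewBrace

namespace SkewBrace

variable {A : Type*} [SkewBrace A]

/-- The ideal generated by a set, as an ideal. -/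
def genIdealIdeal (S : Set A) : Ideal A where
  carrier := genIdeal S
  zero_mem := fun I _ => I.zero_mem
  add_mem := fun _ _ ha hb I hS => I.add_mem (ha I hS) (hb I hS)
  neg_mem := fun _ ha I hS => I.neg_mem (ha I hS)
  add_conj_mem := fun a _ hb I hS => I.add_conj_mem a (hb I hS)
  mul_conj_mem := fun a _ hb I hS => I.mul_conj_mem a (hb I hS)
  lam_mem := fun a _ hb I hS => I.lam_mem a (hb I hS)

lemma subset_genIdeal (S : Set A) : S ⊆ genIdeal S := fun _ hx _ hS => hS hx

lemma genIdeal_subset {S : Set A} {I : Ideal A} (h : S ⊆ I.carrier) :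
    genIdeal S ⊆ I.carrier := fun _ hx => hx I h

lemma genIdeal_carrier (I : Ideal A) : genIdeal I.carrier = I.carrier :=
  subset_antisymm (genIdeal_subset subset_rfl) (subset_genIdeal _)

lemma exists_ideal_sUnion (c : Set (Set A)) (hc : IsChain (· ⊆ ·) c)
    (hne : c.Nonempty) (hid : ∀ s ∈ c, ∃ I : Ideal A, I.carrier = s) :
    ∃ I : Ideal A, I.carrier = ⋃₀ c := by
  refine ⟨⟨⋃₀ c, ?_, ?_, ?_, ?_, ?_, ?_⟩, rfl⟩
  · obtain ⟨s, hs⟩ := hne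
    obtain ⟨I, rfl⟩ := hid s hs
    exact ⟨_, hs, I.zero_mem⟩
  · rintro x y ⟨s, hs, hx⟩ ⟨t, ht, hy⟩
    rcases hc.total hs ht with h | h
    · obtain ⟨I, rfl⟩ := hid t ht
      exact ⟨_, ht, I.add_mem (h hx) hy⟩
    · obtain ⟨I, rfl⟩ := hid s hs
      exact ⟨_, hs, I.add_mem hx (h hy)⟩
  · rintro x ⟨s, hs, hx⟩
    obtain ⟨I, rfl⟩ := hid s hs
    exact ⟨_, hs, I.neg_mem hx⟩
  · rintro a x ⟨s, hs, hx⟩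
    obtain ⟨I, rfl⟩ := hid s hs
    exact ⟨_, hs, I.add_conj_mem a hx⟩
  · rintro a x ⟨s, hs, hx⟩
    obtain ⟨I, rfl⟩ := hid s hs
    exact ⟨_, hs, I.mul_conj_mem a hx⟩
  · rintro a x ⟨s, hs, hx⟩
    obtain ⟨I, rfl⟩ := hid s hs
    exact ⟨_, hs, I.lam_mem a hx⟩

end SkewBrace

open SkewBrace in
/-- the radical equals the set of non-generating elements. -/
theorem radical_eq_nongenerating (A : Type*) [SkewBrace A] :
    radical A =
      {a : A | ∀ S : Set A, genIdeal (S ∪ {a}) = Set.univ → genIdeal S = Set.univ} := by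
  ext a
  simp only [Set.mem_setOf_eq, radical]
  constructor
  · intro ha S hSa
    by_contra hS
    -- `a ∉ genIdeal S`, else `genIdeal S` would contain `S ∪ {a}` hence be everything
    have haS : a ∉ genIdeal S := by
      intro h
      apply hS
      apply Set.eq_univ_of_univ_subset
      rw [← hSa]
      exact genIdeal_subset (I := genIdealIdeal S)
        (Set.union_subset (subset_genIdeal S) (Set.singleton_subset_iff.mpr h))
    -- Zorn's lemma on the family of ideal carriers containing `genIdeal S`, avoiding `a`
    set 𝒞 : Set (Set A) :=
      {c | (∃ I : Ideal A, I.carrier = c) ∧ genIdeal S ⊆ c ∧ a ∉ c} with h𝒞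
    have hx : genIdeal S ∈ 𝒞 := ⟨⟨genIdealIdeal S, rfl⟩, subset_rfl, haS⟩
    obtain ⟨m, hxm, hm𝒞, hmax⟩ := zorn_subset_nonempty 𝒞 (fun c hc hchain hne => by
      obtain ⟨I, hI⟩ := exists_ideal_sUnion c hchain hne (fun s hs => (hc hs).1)
      refine ⟨⋃₀ c, ⟨⟨I, hI⟩, ?_, ?_⟩, fun s hs => Set.subset_sUnion_of_mem hs⟩
      · obtain ⟨s, hs⟩ := hne
        exact (hc hs).2.1.trans (Set.subset_sUnion_of_mem hs)
      · rintro ⟨s, hs, has⟩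
        exact (hc hs).2.2 has) (genIdeal S) hx
    obtain ⟨⟨M, rfl⟩, hSm, ham⟩ := hm𝒞
    -- M is a maximal ideal
    have hMmax : M.IsMaximal := by
      constructor
      · intro h
        exact ham (h ▸ Set.mem_univ a)
      · intro J hMJ
        by_cases haJ : a ∈ J.carrier
        · right
          apply Set.eq_univ_of_univ_subset
          rw [← hSa]
          exact genIdeal_subset
            (Set.union_subset (((subset_genIdeal S).trans hSm).trans hMJ) (by simpa using haJ))
        · left
          exact subset_antisymm (hmax ⟨⟨J, rfl⟩, hSm.trans hMJ, haJ⟩ hMJ) hMJ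
    exact ham (ha M hMmax)
  · intro ha M hM
    by_contra haM
    have h1 : genIdeal (M.carrier ∪ {a}) = Set.univ := by
      rcases hM.2 (genIdealIdeal (M.carrier ∪ {a}))
          (Set.subset_union_left.trans (subset_genIdeal _)) with h | h
      · exact absurd (h ▸ subset_genIdeal (M.carrier ∪ {a}) (Set.mem_union_right _ rfl)) haM
      · exact h
    have h2 := ha M.carrier h1
    rw [genIdeal_carrier] at h2
    exact hM.1 h2
end

section
/- The radical Rad(A) of a skew left brace A equals the sum of all small ideals of A, where an ideal I is small if I + J = A implies J = A for every ideal J. -/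
namespace SkewBrace

/-- The sum `I + J` of two ideals, as a set. -/
def sumSet {A : Type*} [SkewBrace A] (I J : Ideal A) : Set A :=
  {x | ∃ i ∈ I.carrier, ∃ j ∈ J.carrier, x = i + j}

/-- A small (superfluous) ideal: `I + J = A` implies `J = A` for every ideal `J`. -/
def Ideal.IsSmall {A : Type*} [SkewBrace A] (I : Ideal A) : Prop :=
  ∀ J : Ideal A, sumSet I J = Set.univ → J.carrier = Set.univ

section Aux

variable {A : Type*} [SkewBrace A]

lemma mul_zero' (a : A) : a * 0 = a := by
  have h := compat a 0 0
  rw [add_zero] at h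
  have h2 : -a + a * 0 = 0 := left_eq_add.mp h
  have h3 := congrArg (a + ·) h2
  simpa using h3

lemma one_eq_zero' : (1 : A) = 0 := by
  have := mul_zero' (1 : A)
  have h1 : (1 : A) * 0 = 1 * 1 := by rw [this, mul_one]
  exact (mul_left_cancel h1).symm

lemma lam_zero (a : A) : lam a 0 = 0 := by
  simp [lam, mul_zero']

lemma lam_add (a b c : A) : lam a (b + c) = lam a b + lam a c := by
  simp only [lam, compat, add_assoc]

lemma lam_neg (a b : A) : lam a (-b) = -(lam a b) := by
  have h := lam_add a b (-b)
  rw [add_neg_cancel, lam_zero] at h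
  exact (neg_eq_of_add_eq_zero_right h.symm).symm

lemma mul_eq_add_lam (a b : A) : a * b = a + lam a b := by
  rw [lam, add_neg_cancel_left]

lemma lam_lam (a b c : A) : lam (a * b) c = lam a (lam b c) := by
  have h : (a * b) * c = a * b + lam a (lam b c) := by
    rw [mul_assoc]
    conv_lhs => rw [mul_eq_add_lam b c, compat]
    rfl
  rw [lam, h, ← add_assoc, neg_add_cancel, zero_add]

lemma lam_one (b : A) : lam 1 b = b := by
  rw [lam, one_mul, one_eq_zero', neg_zero, zero_add]

lemma lam_inv_cancel (a b : A) : lam a (lam a⁻¹ b) = b := by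
  rw [← lam_lam, mul_inv_cancel, lam_one]

lemma mem_sumSet_mul {I J : Ideal A} {x : A} :
    x ∈ sumSet I J ↔ ∃ i ∈ I.carrier, ∃ j ∈ J.carrier, x = i * j := by
  constructor
  · rintro ⟨i, hi, j, hj, rfl⟩
    exact ⟨i, hi, lam i⁻¹ j, J.lam_mem _ hj, by rw [mul_eq_add_lam, lam_inv_cancel]⟩
  · rintro ⟨i, hi, j, hj, rfl⟩
    exact ⟨i, hi, lam i j, J.lam_mem _ hj, mul_eq_add_lam i j⟩

/-- The sum of two ideals (whose carrier is `sumSet I J`). -/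
def Ideal.sum (I J : Ideal A) : Ideal A where
  carrier := sumSet I J
  zero_mem := ⟨0, I.zero_mem, 0, J.zero_mem, (add_zero 0).symm⟩
  add_mem := by
    rintro a b ⟨i, hi, j, hj, rfl⟩ ⟨i', hi', j', hj', rfl⟩
    refine ⟨i + (j + i' + -j), I.add_mem hi (I.add_conj_mem j hi'),
      j + j', J.add_mem hj hj', ?_⟩
    simp only [add_assoc, neg_add_cancel_left]
  neg_mem := by
    rintro a ⟨i, hi, j, hj, rfl⟩
    refine ⟨-j + -i + -(-j), I.add_conj_mem (-j) (I.neg_mem hi), -j, J.neg_mem hj, ?_⟩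
    simp only [neg_add_rev, add_assoc, neg_neg, add_neg_cancel, add_zero]
  add_conj_mem := by
    rintro a b ⟨i, hi, j, hj, rfl⟩
    refine ⟨a + i + -a, I.add_conj_mem a hi, a + j + -a, J.add_conj_mem a hj, ?_⟩
    simp only [add_assoc, neg_add_cancel_left]
  mul_conj_mem := by
    rintro a b hb
    rw [mem_sumSet_mul] at hb ⊢
    obtain ⟨i, hi, j, hj, rfl⟩ := hb
    refine ⟨a * i * a⁻¹, I.mul_conj_mem a hi, a * j * a⁻¹, J.mul_conj_mem a hj, ?_⟩
    group
  lam_mem := by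
    rintro a b ⟨i, hi, j, hj, rfl⟩
    exact ⟨lam a i, I.lam_mem a hi, lam a j, J.lam_mem a hj, lam_add a i j⟩

/-- `genIdeal S` is an ideal. -/
def Ideal.gen (S : Set A) : Ideal A where
  carrier := genIdeal S
  zero_mem := fun I _ => I.zero_mem
  add_mem := fun _ _ ha hb I hS => I.add_mem (ha I hS) (hb I hS)
  neg_mem := fun _ ha I hS => I.neg_mem (ha I hS)
  add_conj_mem := fun a _ hb I hS => I.add_conj_mem a (hb I hS)
  mul_conj_mem := fun a _ hb I hS => I.mul_conj_mem a (hb I hS)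
  lam_mem := fun a _ hb I hS => I.lam_mem a (hb I hS)

lemma small_subset_maximal {I M : Ideal A} (hI : I.IsSmall) (hM : M.IsMaximal) :
    I.carrier ⊆ M.carrier := by
  have hMK : M.carrier ⊆ (I.sum M).carrier :=
    fun m hm => ⟨0, I.zero_mem, m, hm, (zero_add m).symm⟩
  rcases hM.2 (I.sum M) hMK with h | h
  · intro x hx
    rw [← h]
    exact ⟨x, hx, 0, M.zero_mem, (add_zero x).symm⟩
  · exact absurd (hI M h) hM.1

lemma chain_ideal {c : Set (Set A)} (hne : c.Nonempty) (hchain : IsChain (· ⊆ ·) c)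
    (hid : ∀ C ∈ c, ∃ K : Ideal A, K.carrier = C) :
    ∃ K : Ideal A, K.carrier = ⋃₀ c := by
  obtain ⟨C0, hC0⟩ := hne
  have mem_of : ∀ C ∈ c, ∀ {P : A → Prop},
      (∀ K : Ideal A, K.carrier = C → ∀ y ∈ C, P y) → True := fun _ _ _ _ => trivial
  refine ⟨⟨⋃₀ c, ?_, ?_, ?_, ?_, ?_, ?_⟩, rfl⟩
  · obtain ⟨K, hK⟩ := hid C0 hC0
    exact ⟨C0, hC0, hK ▸ K.zero_mem⟩
  · rintro a b ⟨C1, hC1, ha⟩ ⟨C2, hC2, hb⟩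
    rcases hchain.total hC1 hC2 with h | h
    · obtain ⟨K, hK⟩ := hid C2 hC2
      exact ⟨C2, hC2, hK ▸ K.add_mem (hK.symm ▸ h ha) (hK.symm ▸ hb)⟩
    · obtain ⟨K, hK⟩ := hid C1 hC1
      exact ⟨C1, hC1, hK ▸ K.add_mem (hK.symm ▸ ha) (hK.symm ▸ h hb)⟩
  · rintro a ⟨C1, hC1, ha⟩
    obtain ⟨K, hK⟩ := hid C1 hC1
    exact ⟨C1, hC1, hK ▸ K.neg_mem (hK.symm ▸ ha)⟩
  · rintro a b ⟨C1, hC1, hb⟩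
    obtain ⟨K, hK⟩ := hid C1 hC1
    exact ⟨C1, hC1, hK ▸ K.add_conj_mem a (hK.symm ▸ hb)⟩
  · rintro a b ⟨C1, hC1, hb⟩
    obtain ⟨K, hK⟩ := hid C1 hC1
    exact ⟨C1, hC1, hK ▸ K.mul_conj_mem a (hK.symm ▸ hb)⟩
  · rintro a b ⟨C1, hC1, hb⟩
    obtain ⟨K, hK⟩ := hid C1 hC1
    exact ⟨C1, hC1, hK ▸ K.lam_mem a (hK.symm ▸ hb)⟩

end Aux

/-- the radical equals the sum of all small ideals. -/
theorem radical_eq_sum_small (A : Type*) [SkewBrace A] :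
    radical A =
      (AddSubgroup.closure {x : A | ∃ I : Ideal A, I.IsSmall ∧ x ∈ I.carrier} :
        AddSubgroup A) := by
  ext x
  constructor
  · intro hx
    -- `x ∈ radical A`; show the ideal generated by `x` is small.
    set Ix : Ideal A := Ideal.gen {x} with hIx
    have hxmem : x ∈ Ix.carrier := fun K hK => hK rfl
    have hsmall : Ix.IsSmall := by
      intro J hJ
      by_contra hJ'
      set 𝒮 : Set (Set A) :=
        {C | (∃ K : Ideal A, K.carrier = C) ∧ J.carrier ⊆ C ∧ x ∉ C} with h𝒮
      have hxJ : x ∉ J.carrier := by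
        intro hxJ
        apply hJ'
        have hsub : sumSet Ix J ⊆ J.carrier := by
          rintro y ⟨i, hi, j, hj, rfl⟩
          exact J.add_mem (hi J (Set.singleton_subset_iff.mpr hxJ)) hj
        rw [hJ] at hsub
        exact Set.univ_subset_iff.mp hsub
      have hJS : J.carrier ∈ 𝒮 := ⟨⟨J, rfl⟩, subset_rfl, hxJ⟩
      have hzorn : ∀ c ⊆ 𝒮, IsChain (· ⊆ ·) c → c.Nonempty →
          ∃ ub ∈ 𝒮, ∀ s ∈ c, s ⊆ ub := by
        intro c hc hchain hcne
        obtain ⟨K, hK⟩ := chain_ideal hcne hchain (fun C hC => (hc hC).1)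
        refine ⟨⋃₀ c, ⟨⟨K, hK⟩, ?_, ?_⟩, fun s hs => Set.subset_sUnion_of_mem hs⟩
        · obtain ⟨C0, hC0⟩ := hcne
          exact (hc hC0).2.1.trans (Set.subset_sUnion_of_mem hC0)
        · rintro ⟨C, hC, hxC⟩
          exact (hc hC).2.2 hxC
      obtain ⟨Mc, hJM, hMmax⟩ := zorn_subset_nonempty 𝒮 hzorn J.carrier hJS
      obtain ⟨⟨K, hKc⟩, hJMc, hxM⟩ := hMmax.prop
      have hKmax : K.IsMaximal := by
        constructor
        · rw [hKc]
          intro h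
          exact hxM (h ▸ Set.mem_univ x)
        · intro L hL
          by_cases hxL : x ∈ L.carrier
          · right
            apply Set.univ_subset_iff.mp
            rw [← hJ]
            rintro y ⟨i, hi, j, hj, rfl⟩
            exact L.add_mem (hi L (Set.singleton_subset_iff.mpr hxL))
              (hL (hKc ▸ hJMc hj))
          · left
            have hLS : L.carrier ∈ 𝒮 :=
              ⟨⟨L, rfl⟩, fun y hy => hL (hKc ▸ hJMc hy), hxL⟩
            have hle : Mc ⊆ L.carrier := hKc ▸ hL
            have := hMmax.2 hLS hle
            rw [hKc]
            exact subset_antisymm this hle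
      have hxK : x ∈ K.carrier := hx K hKmax
      rw [hKc] at hxK
      exact hxM hxK
    exact AddSubgroup.subset_closure ⟨Ix, hsmall, hxmem⟩
  · intro hx
    intro M hM
    refine AddSubgroup.closure_induction ?_ ?_ ?_ ?_ hx
    · rintro y ⟨I, hIs, hyI⟩
      exact small_subset_maximal hIs hM hyI
    · exact M.zero_mem
    · exact fun a b _ _ ha hb => M.add_mem ha hb
    · exact fun a _ ha => M.neg_mem ha

end SkewBrace
end

section
/- Let M be a maximal ideal of a skew left brace A. Then M is a prime ideal if and only if A⁽²⁾ is not contained in M. -/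
def SkewBrace.topIdeal (A : Type*) [SkewBrace A] : SkewBrace.Ideal A where
  carrier := Set.univ
  zero_mem := trivial
  add_mem := fun _ _ _ _ => trivial
  neg_mem := fun _ _ => trivial
  add_conj_mem := fun _ _ _ => trivial
  mul_conj_mem := fun _ _ _ => trivial
  lam_mem := fun _ _ _ => trivial

open SkewBrace in
/-- a maximal ideal `M` is prime iff `A⁽²⁾ ⊄ M`. -/
theorem maximal_prime_iff (A : Type*) [SkewBrace A] (M : Ideal A) (hM : M.IsMaximal) :
    M.IsPrime ↔ ¬ sq A ⊆ M.carrier := by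
  constructor
  · intro hP hsq
    have h := hP (topIdeal A) (topIdeal A) (fun _ _ => trivial) (fun _ _ => trivial)
      (fun i _ j _ => hsq (fun I hI => hI ⟨i, j, rfl⟩))
    rcases h with h | h
    · exact hM.1 (Set.eq_univ_of_univ_subset h)
    · exact hM.1 (Set.eq_univ_of_univ_subset h)
  · intro hsq I J hMI hMJ hstar
    rcases hM.2 I hMI with hI | hI
    · exact Or.inl (hI ▸ Set.Subset.rfl)
    · rcases hM.2 J hMJ with hJ | hJ
      · exact Or.inr (hJ ▸ Set.Subset.rfl)
      · exfalso
        apply hsq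
        intro x hx
        apply hx M
        rintro y ⟨a, b, rfl⟩
        exact hstar a (hI ▸ trivial) b (hJ ▸ trivial)
end

section
/- If I is a proper ideal of a skew left brace A such that A/I has finite weight, then there exists a maximal ideal M of A containing I. -/
namespace SkewBraceAux
open SkewBrace

variable {A B : Type*} [SkewBrace A] [SkewBrace B]

theorem map_zero (f : BraceHom A B) : f.toFun 0 = 0 := by
  have h := f.map_add' 0 0
  rw [add_zero] at h
  exact (add_eq_left).mp h.symm

theorem map_neg (f : BraceHom A B) (a : A) : f.toFun (-a) = -f.toFun a := by
  have h := f.map_add' a (-a)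
  rw [add_neg_cancel, map_zero] at h
  exact eq_neg_of_add_eq_zero_right h.symm

theorem map_one (f : BraceHom A B) : f.toFun 1 = 1 := by
  have h := f.map_mul' 1 1
  rw [mul_one] at h
  exact (mul_eq_left).mp h.symm

theorem map_inv (f : BraceHom A B) (a : A) : f.toFun a⁻¹ = (f.toFun a)⁻¹ := by
  have h := f.map_mul' a a⁻¹
  rw [mul_inv_cancel, map_one] at h
  exact eq_inv_of_mul_eq_one_right h.symm

/-- Image of an ideal under a surjective brace hom. -/
def imageIdeal (f : BraceHom A B) (hf : Function.Surjective f.toFun) (J : Ideal A) :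
    Ideal B where
  carrier := f.toFun '' J.carrier
  zero_mem := ⟨0, J.zero_mem, map_zero f⟩
  add_mem := by
    rintro _ _ ⟨a, ha, rfl⟩ ⟨b, hb, rfl⟩
    exact ⟨a + b, J.add_mem ha hb, f.map_add' a b⟩
  neg_mem := by
    rintro _ ⟨a, ha, rfl⟩
    exact ⟨-a, J.neg_mem ha, map_neg f a⟩
  add_conj_mem := by
    rintro b _ ⟨a, ha, rfl⟩
    obtain ⟨c, rfl⟩ := hf b
    exact ⟨c + a + -c, J.add_conj_mem c ha, by
      rw [f.map_add', f.map_add', map_neg]⟩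
  mul_conj_mem := by
    rintro b _ ⟨a, ha, rfl⟩
    obtain ⟨c, rfl⟩ := hf b
    exact ⟨c * a * c⁻¹, J.mul_conj_mem c ha, by
      rw [f.map_mul', f.map_mul', map_inv]⟩
  lam_mem := by
    rintro b _ ⟨a, ha, rfl⟩
    obtain ⟨c, rfl⟩ := hf b
    exact ⟨lam c a, J.lam_mem c ha, by
      simp only [lam]
      rw [f.map_add', f.map_mul', map_neg]⟩

theorem chain_finset_subset {c : Set (Set A)} (hc : IsChain (· ⊆ ·) c)
    (hne : c.Nonempty) (T : Finset A) (hT : (↑T : Set A) ⊆ ⋃₀ c) :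
    ∃ s ∈ c, (↑T : Set A) ⊆ s := by
  classical
  induction T using Finset.induction_on with
  | empty => exact ⟨hne.choose, hne.choose_spec, by simp⟩
  | @insert x T hx ih =>
    obtain ⟨s, hs, hTs⟩ := ih (fun y hy => hT (by simp [hy]))
    obtain ⟨t, ht, hxt⟩ := hT (Finset.mem_coe.mpr (Finset.mem_insert_self x T))
    rcases hc.total hs ht with h | h
    · refine ⟨t, ht, fun y hy => ?_⟩
      rcases Finset.mem_insert.mp hy with rfl | hy
      · exact hxt
      · exact h (hTs hy)
    · refine ⟨s, hs, fun y hy => ?_⟩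
      rcases Finset.mem_insert.mp hy with rfl | hy
      · exact h hxt
      · exact hTs hy

/-- Union of a nonempty chain of ideal carriers is an ideal. -/
def chainIdeal (c : Set (Set A)) (hc : IsChain (· ⊆ ·) c) (hne : c.Nonempty)
    (hid : ∀ s ∈ c, ∃ J : Ideal A, J.carrier = s) : Ideal A where
  carrier := ⋃₀ c
  zero_mem := by
    obtain ⟨s, hs⟩ := hne
    obtain ⟨J, rfl⟩ := hid s hs
    exact ⟨_, hs, J.zero_mem⟩
  add_mem := by
    rintro a b ⟨s, hs, has⟩ ⟨t, ht, hbt⟩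
    rcases hc.total hs ht with h | h
    · obtain ⟨J, rfl⟩ := hid t ht
      exact ⟨_, ht, J.add_mem (h has) hbt⟩
    · obtain ⟨J, rfl⟩ := hid s hs
      exact ⟨_, hs, J.add_mem has (h hbt)⟩
  neg_mem := by
    rintro a ⟨s, hs, has⟩
    obtain ⟨J, rfl⟩ := hid s hs
    exact ⟨_, hs, J.neg_mem has⟩
  add_conj_mem := by
    rintro x a ⟨s, hs, has⟩
    obtain ⟨J, rfl⟩ := hid s hs
    exact ⟨_, hs, J.add_conj_mem x has⟩
  mul_conj_mem := by
    rintro x a ⟨s, hs, has⟩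
    obtain ⟨J, rfl⟩ := hid s hs
    exact ⟨_, hs, J.mul_conj_mem x has⟩
  lam_mem := by
    rintro x a ⟨s, hs, has⟩
    obtain ⟨J, rfl⟩ := hid s hs
    exact ⟨_, hs, J.lam_mem x has⟩

end SkewBraceAux

open SkewBrace in
/-- if `I` is a proper ideal of `A` such that `A/I` has finite
weight, then there is a maximal ideal of `A` containing `I` (the quotient is
presented as a surjective brace homomorphism with kernel `I`). -/
theorem exists_maximal_ideal_above (A B : Type*) [SkewBrace A] [SkewBrace B]
    (I : Ideal A) (hI : I.carrier ≠ Set.univ)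
    (f : BraceHom A B) (hf : Function.Surjective f.toFun) (hker : f.ker = I.carrier)
    (hw : weight B ≠ ⊤) :
    ∃ M : Ideal A, M.IsMaximal ∧ I.carrier ⊆ M.carrier := by
  classical
  open SkewBraceAux in
  -- B is not a subsingleton
  have hns : ¬ Subsingleton B := by
    intro h
    apply hI
    ext a
    simp only [Set.mem_univ, iff_true]
    rw [← hker]
    exact Subsingleton.elim _ _
  -- extract a finite generating set for B
  have hS : ∃ S : Finset B, genIdeal (↑S : Set B) = Set.univ := by
    by_contra h
    push_neg at h
    apply hw
    rw [weight, if_neg hns]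
    rw [iInf_eq_top]
    intro S
    rw [iInf_eq_top]
    intro hgen
    exact absurd hgen (h S)
  obtain ⟨S, hSgen⟩ := hS
  -- pick preimages
  have hsec : ∀ b : B, ∃ a : A, f.toFun a = b := hf
  choose g hg using hsec
  set T : Finset A := S.image g with hT
  -- key claim: any ideal containing I and T is everything
  have key : ∀ J : Ideal A, I.carrier ⊆ J.carrier → (↑T : Set A) ⊆ J.carrier →
      J.carrier = Set.univ := by
    intro J hIJ hTJ
    have himg : (↑S : Set B) ⊆ (imageIdeal f hf J).carrier := by
      intro b hb
      exact ⟨g b, hTJ (by simpa [hT] using Finset.mem_image_of_mem g hb), hg b⟩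
    have : (imageIdeal f hf J).carrier = Set.univ := by
      apply Set.eq_univ_of_univ_subset
      rw [← hSgen]
      intro x hx
      exact hx _ himg
    ext a
    simp only [Set.mem_univ, iff_true]
    have : f.toFun a ∈ (imageIdeal f hf J).carrier := by rw [this]; trivial
    obtain ⟨j, hj, hfj⟩ := this
    have hmem : a + -j ∈ I.carrier := by
      rw [← hker]
      show f.toFun (a + -j) = 0
      rw [f.map_add', SkewBraceAux.map_neg, hfj, add_neg_cancel]
    have := J.add_mem (hIJ hmem) hj
    simpa using this
  -- the collection of proper ideals containing I
  set 𝒮 : Set (Set A) := {s | (∃ J : Ideal A, J.carrier = s) ∧ s ≠ Set.univ ∧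
      I.carrier ⊆ s} with h𝒮
  have hI𝒮 : I.carrier ∈ 𝒮 := ⟨⟨I, rfl⟩, hI, subset_rfl⟩
  have hchains : ∀ c ⊆ 𝒮, IsChain (· ⊆ ·) c → c.Nonempty → ∃ ub ∈ 𝒮, ∀ s ∈ c, s ⊆ ub := by
    intro c hc𝒮 hchain hcne
    refine ⟨⋃₀ c, ⟨⟨chainIdeal c hchain hcne (fun s hs => (hc𝒮 hs).1), rfl⟩, ?_, ?_⟩,
      fun s hs => Set.subset_sUnion_of_mem hs⟩
    · -- properness
      intro huniv
      have hTsub : (↑T : Set A) ⊆ ⋃₀ c := by rw [huniv]; exact Set.subset_univ _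
      obtain ⟨s, hs, hTs⟩ := chain_finset_subset hchain hcne T hTsub
      obtain ⟨⟨J, hJ⟩, hsne, hIs⟩ := hc𝒮 hs
      exact hsne (hJ ▸ key J (hJ.symm ▸ hIs) (hJ.symm ▸ hTs))
    · obtain ⟨s, hs⟩ := hcne
      exact (hc𝒮 hs).2.2.trans (Set.subset_sUnion_of_mem hs)
  obtain ⟨m, hIm, hm𝒮, hmax⟩ := zorn_subset_nonempty 𝒮 hchains I.carrier hI𝒮
  obtain ⟨⟨M, hM⟩, hmne, hIsub⟩ := hm𝒮
  refine ⟨M, ⟨by rw [hM]; exact hmne, ?_⟩, by rw [hM]; exact hIsub⟩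
  intro J hMJ
  by_cases hJ : J.carrier = Set.univ
  · exact Or.inr hJ
  · left
    rw [hM]
    exact le_antisymm (hmax ⟨⟨J, rfl⟩, hJ, hIsub.trans (hM ▸ hMJ)⟩ (hM ▸ hMJ)) (hM ▸ hMJ)
end
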